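/- arXiv:2403.14445 — 3 statements merged into one kernel-verified Lean document; each statement's English description precedes it below -/
import Mathlib

section
/- Let t ≥ 3, let m ≥ 1, and let α be a finite type with |α| ≤ t − 1. There is no injective function f : Fin t → (Fin m → α) such that for all i, j, the Hamming distance between f i and f j is at most 1. (Equivalently: t pairwise-distinct vectors over an alphabet of size at most t−1 cannot be pairwise at Hamming distance ≤ 1.) -/
lemma two_le_hammingDist {m : ℕ} {α : Type*} [DecidableEq α]
    {x y : Fin m → α} {a b : Fin m} (hab : a ≠ b)
    (ha : x a ≠ y a) (hb : x b ≠ y b) : 2 ≤ hammingDist x y := by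
  unfold hammingDist
  exact Finset.one_lt_card.mpr ⟨a, by simpa using ha, b, by simpa using hb, hab⟩

theorem stmt_1 {t m : ℕ} (ht : 3 ≤ t) (hm : 1 ≤ m)
    {α : Type*} [Fintype α] [DecidableEq α] (hcard : Fintype.card α ≤ t - 1) :
    ¬ ∃ f : Fin t → (Fin m → α), Function.Injective f ∧
        ∀ i j : Fin t, hammingDist (f i) (f j) ≤ 1 := by
  rintro ⟨f, hinj, hd⟩
  set z : Fin t := ⟨0, by omega⟩ with hz
  set o : Fin t := ⟨1, by omega⟩ with ho
  have hzo : z ≠ o := by simp [hz, ho, Fin.ext_iff]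
  have hfzo : f z ≠ f o := fun h => hzo (hinj h)
  obtain ⟨k, hk⟩ := Function.ne_iff.mp hfzo
  -- f z and f o agree off k
  have hagree : ∀ c, c ≠ k → f z c = f o c := by
    intro c hc
    by_contra hcc
    exact absurd (hd z o) (by have := two_le_hammingDist hc hcc hk; omega)
  -- every f i agrees with f z off k
  have key : ∀ i c, c ≠ k → f i c = f z c := by
    intro i c hc
    by_contra hcc
    have hik : f i k = f z k := by
      by_contra hkk
      exact absurd (hd i z) (by have := two_le_hammingDist hc hcc hkk; omega)
    have h1 : f i c ≠ f o c := by rw [← hagree c hc]; exact hcc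
    have h2 : f i k ≠ f o k := by rw [hik]; exact hk
    exact absurd (hd i o) (by have := two_le_hammingDist hc h1 h2; omega)
  have ginj : Function.Injective (fun i => f i k) := by
    intro i j hij
    apply hinj
    funext c
    by_cases hc : c = k
    · subst hc; exact hij
    · rw [key i c hc, key j c hc]
  have := Fintype.card_le_of_injective _ ginj
  simp at this
  omega
end

section
/- Using the sequential R-LLSC model: for any finite sequence s of operations applied from the initial state (v₀, ∅), an SC by process p placed at the end of s succeeds (i.e., p is in the context after s) if and only if p performs at least one LL in s, and in the suffix of s strictly after p's last LL there is no RL by p, no Store, and no successful SC (by any process). -/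
inductive RLLSCOp (n : ℕ) (V : Type*) where
  | LL (p : Fin n)
  | VL (p : Fin n)
  | RL (p : Fin n)
  | SC (p : Fin n) (w : V)
  | Load
  | Store (w : V)
  deriving DecidableEq

def RLLSCStep {n : ℕ} {V : Type*} (s : V × Finset (Fin n)) :
    RLLSCOp n V → V × Finset (Fin n)
  | .LL p => (s.1, insert p s.2)
  | .VL _ => s
  | .RL p => (s.1, s.2.erase p)
  | .SC p w => if p ∈ s.2 then (w, (∅ : Finset (Fin n))) else s
  | .Load => s
  | .Store w => (w, (∅ : Finset (Fin n)))

/-- Running a sequence of operations from the initial state `(v₀, ∅)`. -/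
def RLLSCRun {n : ℕ} {V : Type*} (v₀ : V) (ops : List (RLLSCOp n V)) :
    V × Finset (Fin n) :=
  List.foldl RLLSCStep (v₀, (∅ : Finset (Fin n))) ops

lemma concat_split {α : Type*} {l₂ l₃ l₄ : List α} {a o : α}
    (h : l₂ ++ [a] = l₃ ++ o :: l₄) :
    (l₃ = l₂ ∧ o = a ∧ l₄ = []) ∨ ∃ l₄', l₄ = l₄' ++ [a] ∧ l₂ = l₃ ++ o :: l₄' := by
  rcases l₄.eq_nil_or_concat with rfl | ⟨l₄', a', rfl⟩
  · left
    have h2 := List.append_inj' h (by simp)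
    exact ⟨h2.1.symm, by simpa using h2.2.symm, rfl⟩
  · right
    simp only [List.concat_eq_append] at h ⊢
    rw [show l₃ ++ o :: (l₄' ++ [a']) = (l₃ ++ o :: l₄') ++ [a'] by simp] at h
    have h2 := List.append_inj' h (by simp)
    have : a = a' := by simpa using h2.2
    exact ⟨l₄', by rw [this], h2.1⟩

def Rprop {n : ℕ} {V : Type*} (v₀ : V) (p : Fin n) (s : List (RLLSCOp n V)) : Prop :=
  ∃ l₁ l₂ : List (RLLSCOp n V),
    s = l₁ ++ RLLSCOp.LL p :: l₂ ∧ RLLSCOp.LL p ∉ l₂ ∧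
    ∀ (l₃ : List (RLLSCOp n V)) (o : RLLSCOp n V) (l₄ : List (RLLSCOp n V)),
      l₂ = l₃ ++ o :: l₄ →
        o ≠ RLLSCOp.RL p ∧ (∀ w, o ≠ RLLSCOp.Store w) ∧
        (∀ q w, o = RLLSCOp.SC q w →
          q ∉ (RLLSCRun v₀ (l₁ ++ RLLSCOp.LL p :: l₃)).2)

lemma Rprop_concat {n : ℕ} {V : Type*} (v₀ : V) (p : Fin n)
    (t : List (RLLSCOp n V)) (a : RLLSCOp n V) (ha : a ≠ RLLSCOp.LL p) :
    Rprop v₀ p (t ++ [a]) ↔ Rprop v₀ p t ∧ a ≠ RLLSCOp.RL p ∧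
      (∀ w, a ≠ RLLSCOp.Store w) ∧
      (∀ q w, a = RLLSCOp.SC q w → q ∉ (RLLSCRun v₀ t).2) := by
  constructor
  · rintro ⟨l₁, l₂, heq, hnot, hcond⟩
    rcases concat_split heq with ⟨rfl, h2, rfl⟩ | ⟨l₂', rfl, heq'⟩
    · exact absurd h2.symm ha
    · subst heq'
      have hc := hcond l₂' a [] rfl
      refine ⟨⟨l₁, l₂', rfl, fun h => hnot (by simp [h]),
        fun l₃ o l₄ h => hcond l₃ o (l₄ ++ [a]) (by simp [h])⟩,
        hc.1, hc.2.1, hc.2.2⟩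
  · rintro ⟨⟨l₁, l₂, rfl, hnot, hcond⟩, h1, h2, h3⟩
    refine ⟨l₁, l₂ ++ [a], by simp, ?_, ?_⟩
    · simp only [List.mem_append, List.mem_singleton]
      rintro (h | h)
      · exact hnot h
      · exact ha h.symm
    · intro l₃ o l₄ h
      rcases concat_split h with ⟨rfl, rfl, rfl⟩ | ⟨l₄', rfl, rfl⟩
      · exact ⟨h1, h2, h3⟩
      · exact hcond l₃ o l₄' rfl

lemma Rprop_nil {n : ℕ} {V : Type*} (v₀ : V) (p : Fin n) :
    ¬ Rprop v₀ p ([] : List (RLLSCOp n V)) := by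
  rintro ⟨l₁, l₂, heq, -⟩
  exact absurd heq.symm (by simp)

lemma run_concat {n : ℕ} {V : Type*} (v₀ : V) (t : List (RLLSCOp n V)) (a : RLLSCOp n V) :
    RLLSCRun v₀ (t ++ [a]) = RLLSCStep (RLLSCRun v₀ t) a := by
  simp [RLLSCRun, List.foldl_append]

lemma key {n : ℕ} {V : Type*} (v₀ : V)
    (s : List (RLLSCOp n V)) (p : Fin n) :
    p ∈ (RLLSCRun v₀ s).2 ↔ Rprop v₀ p s := by
  induction s using List.reverseRecOn with
  | nil => simpa [RLLSCRun] using Rprop_nil v₀ p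
  | append_singleton t a ih =>
    rw [run_concat]
    cases a with
    | LL q =>
      rcases eq_or_ne q p with rfl | hq
      · simp only [RLLSCStep, Finset.mem_insert]
        constructor
        · intro _
          exact ⟨t, [], rfl, by simp, by simp⟩
        · exact fun _ => Or.inl trivial
      · rw [Rprop_concat _ _ _ _ (by simp [hq])]
        simp only [RLLSCStep, Finset.mem_insert]
        constructor
        · rintro (h | h)
          · exact absurd h hq.symm
          · exact ⟨ih.mp h, by simp, by simp, by simp⟩
        · rintro ⟨h, -⟩; exact Or.inr (ih.mpr h)
    | VL q =>
      rw [Rprop_concat _ _ _ _ (by simp)]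
      simp only [RLLSCStep]
      exact ⟨fun h => ⟨ih.mp h, by simp, by simp, by simp⟩, fun h => ih.mpr h.1⟩
    | Load =>
      rw [Rprop_concat _ _ _ _ (by simp)]
      simp only [RLLSCStep]
      exact ⟨fun h => ⟨ih.mp h, by simp, by simp, by simp⟩, fun h => ih.mpr h.1⟩
    | RL q =>
      rw [Rprop_concat _ _ _ _ (by simp)]
      simp only [RLLSCStep, Finset.mem_erase]
      constructor
      · rintro ⟨hne, h⟩
        exact ⟨ih.mp h, by simp [Ne.symm hne], by simp, by simp⟩
      · rintro ⟨h, h1, -, -⟩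
        refine ⟨fun hpq => h1 (by rw [hpq]), ih.mpr h⟩
    | SC q w =>
      rw [Rprop_concat _ _ _ _ (by simp)]
      simp only [RLLSCStep]
      split_ifs with hmem
      · simp only [Finset.notMem_empty, false_iff]
        rintro ⟨-, -, -, h3⟩
        exact h3 q w rfl hmem
      · constructor
        · intro h
          exact ⟨ih.mp h, by simp, by simp, fun q' w' hq' => by
            cases hq'; exact hmem⟩
        · rintro ⟨h, -⟩; exact ih.mpr h
    | Store w =>
      rw [Rprop_concat _ _ _ _ (by simp)]
      simp only [RLLSCStep, Finset.notMem_empty, false_iff]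
      rintro ⟨-, -, h2, -⟩
      exact h2 w rfl

/-- An `SC` by `p` appended at the end of `s` succeeds iff `p` is in the context
after `s`, which holds iff `p` performed an `LL` in `s` and, strictly after `p`'s
last `LL`, there is no `RL` by `p`, no `Store`, and no successful `SC`. -/
theorem stmt_11 {n : ℕ} {V : Type*} (v₀ : V)
    (s : List (RLLSCOp n V)) (p : Fin n) :
    p ∈ (RLLSCRun v₀ s).2 ↔
      ∃ l₁ l₂ : List (RLLSCOp n V),
        s = l₁ ++ RLLSCOp.LL p :: l₂ ∧ RLLSCOp.LL p ∉ l₂ ∧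
        ∀ (l₃ : List (RLLSCOp n V)) (o : RLLSCOp n V) (l₄ : List (RLLSCOp n V)),
          l₂ = l₃ ++ o :: l₄ →
            o ≠ RLLSCOp.RL p ∧ (∀ w, o ≠ RLLSCOp.Store w) ∧
            (∀ q w, o = RLLSCOp.SC q w →
              q ∉ (RLLSCRun v₀ (l₁ ++ RLLSCOp.LL p :: l₃)).2) := by
  exact key v₀ s p
end

section
/- Model the array A of the history-independent multi-valued register as a function Fin K → Bool, and define the canonical representation can v := (fun j => j = v). Define the update sequence of Write(v) as the list of single-cell updates: first set index v to true, then set indices v−1, v−2, …, 0 to false in decreasing order, then set indices v+1, v+2, …, K−1 to false in increasing order. Then for any u v : Fin K: (1) applying the full update sequence of Write(v) to can u yields can v; and (2) after applying any prefix of the update sequence of Write(v) to can u, there exists at least one index j with the array value at j equal to true. -/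
/-!
The first update of `Write(v)` sets cell `v`; every later update writes `false` to a cell
other than `v`, and every cell other than `v` is hit. So cell `v` stays set from the first
step on, which gives (2), and the final array is `canArr v` whatever the starting array,
which gives (1).
-/

/-- Canonical representation of value `v`: the array that is `true` exactly at `v`. -/
def canArr {K : ℕ} (v : Fin K) : Fin K → Bool := fun j => decide (j = v)

/-- Apply a single-cell update `(index, value)` to the array. -/
def applyUpd {K : ℕ} (A : Fin K → Bool) (u : Fin K × Bool) : Fin K → Bool :=
  Function.update A u.1 u.2

/-- The sequence of single-cell updates performed by `Write(v)`:
first set index `v` to `true`, then set indices `v-1, …, 0` to `false` in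
decreasing order, then set indices `v+1, …, K-1` to `false` in increasing order. -/
def writeSeq {K : ℕ} (v : Fin K) : List (Fin K × Bool) :=
  ((v, true) : Fin K × Bool) ::
    (((List.range v.val).reverse.pmap
        (fun j (h : j < K) => ((⟨j, h⟩ : Fin K), false))
        (fun j hj =>
          lt_trans (List.mem_range.mp (List.mem_reverse.mp hj)) v.isLt)) ++
      ((List.range K).drop (v.val + 1)).pmap
        (fun j (h : j < K) => ((⟨j, h⟩ : Fin K), false))
        (fun j hj => List.mem_range.mp (List.mem_of_mem_drop hj)))

section

variable {K : ℕ}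

theorem foldl_applyUpd_of_forall_ne (L : List (Fin K × Bool)) (A : Fin K → Bool)
    {j : Fin K} (hL : ∀ p ∈ L, p.1 ≠ j) : L.foldl applyUpd A j = A j := by
  induction L generalizing A with
  | nil => rfl
  | cons p L ih =>
    rw [List.foldl_cons, ih _ fun q hq => hL q (List.mem_cons_of_mem _ hq)]
    exact Function.update_of_ne (hL p List.mem_cons_self).symm _ _

theorem foldl_applyUpd_of_mem (L : List (Fin K × Bool)) (A : Fin K → Bool)
    {j : Fin K} {b : Bool} (hb : ∀ p ∈ L, p.2 = b) (hj : ∃ p ∈ L, p.1 = j) :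
    L.foldl applyUpd A j = b := by
  induction L generalizing A with
  | nil => simp at hj
  | cons p L ih =>
    rw [List.foldl_cons]
    by_cases hL : ∃ q ∈ L, q.1 = j
    · exact ih _ (fun q hq => hb q (List.mem_cons_of_mem _ hq)) hL
    · push Not at hL
      obtain ⟨q, hq, rfl⟩ := hj
      obtain rfl : q = p := (List.mem_cons.mp hq).resolve_right fun h => hL q h rfl
      rw [foldl_applyUpd_of_forall_ne L _ hL, applyUpd, Function.update_self,
        hb _ List.mem_cons_self]

theorem writeSeq_eq_cons (v : Fin K) :
    writeSeq v = (v, true) :: (writeSeq v).tail := rfl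

theorem mem_writeSeq_tail {v : Fin K} {p : Fin K × Bool} :
    p ∈ (writeSeq v).tail ↔ p.1 ≠ v ∧ p.2 = false := by
  obtain ⟨⟨j, hj⟩, b⟩ := p
  simp only [writeSeq, List.pmap_reverse, List.tail_cons, List.mem_append, List.mem_reverse,
    List.mem_pmap, Prod.mk.injEq, Fin.ext_iff, Bool.false_eq, List.mem_range, exists_and_left,
    exists_prop, exists_eq_left, List.mem_drop_iff_getElem, List.getElem_range, List.length_range,
    ne_eq]
  constructor
  · rintro (⟨h, rfl⟩ | ⟨⟨i, -, rfl⟩, rfl⟩) <;> exact ⟨by omega, rfl⟩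
  · rintro ⟨h, rfl⟩
    rcases Nat.lt_or_gt_of_ne h with h | h
    · exact .inl ⟨h, rfl⟩
    · exact .inr ⟨⟨j - (v.val + 1), by omega, by omega⟩, rfl⟩

theorem foldl_applyUpd_writeSeq (A : Fin K → Bool) (v : Fin K) :
    (writeSeq v).foldl applyUpd A = canArr v := by
  rw [writeSeq_eq_cons, List.foldl_cons]
  funext j
  by_cases hj : j = v
  · subst hj
    rw [foldl_applyUpd_of_forall_ne _ _ fun p hp => (mem_writeSeq_tail.mp hp).1]
    simp [applyUpd, canArr]
  · rw [foldl_applyUpd_of_mem _ _ (fun p hp => (mem_writeSeq_tail.mp hp).2)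
      ⟨(j, false), mem_writeSeq_tail.mpr ⟨hj, rfl⟩, rfl⟩]
    simp [canArr, hj]

theorem foldl_applyUpd_apply_self_of_prefix_writeSeq (A : Fin K → Bool) {v : Fin K}
    {pre : List (Fin K × Bool)} (hpre : pre <+: writeSeq v) (hne : pre ≠ []) :
    pre.foldl applyUpd A v = true := by
  obtain ⟨p, pre, rfl⟩ := List.exists_cons_of_ne_nil hne
  rw [writeSeq_eq_cons] at hpre
  obtain ⟨rfl, htail⟩ := List.cons_prefix_cons.mp hpre
  rw [List.foldl_cons, foldl_applyUpd_of_forall_ne _ _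
    fun q hq => (mem_writeSeq_tail.mp (htail.subset hq)).1]
  exact Function.update_self ..

end

theorem stmt_12 {K : ℕ} (u v : Fin K) :
    (List.foldl applyUpd (canArr u) (writeSeq v) = canArr v) ∧
    (∀ pre : List (Fin K × Bool), pre <+: writeSeq v →
      ∃ j : Fin K, List.foldl applyUpd (canArr u) pre j = true) := by
  refine ⟨foldl_applyUpd_writeSeq _ v, fun pre hpre => ?_⟩
  rcases eq_or_ne pre [] with rfl | hne
  · exact ⟨u, by simp [canArr]⟩
  · exact ⟨v, foldl_applyUpd_apply_self_of_prefix_writeSeq _ hpre hne⟩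
end
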